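/- Let λ > 0 and let 0 ≤ A ≤ t be real numbers. Then the truncated Laplace measure assigns to the left tail the value Lap(λ, −t)(Set.Iic (A − t)) = (exp(A/λ) − 1)/(2·exp(t/λ) − 1). Equivalently, for a Laplace random variable X with mean 0 and parameter λ, Pr[X ≤ −t + A | X > −t] = (exp(A/λ) − 1)/(2·exp(t/λ) − 1). -/

import Mathlib

open MeasureTheory Real

/-!
On `(-∞, c]` with `c ≤ 0` the Laplace density is `e^{u/λ}/(2λ)`, so `Lap(λ)(Iic c) = e^{c/λ}/2`.
Both the conditioned event `(-t, A - t]` and the conditioning event `(-t, ∞)`, the complement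
of `Iic (-t)` in a probability space, are read off from this, and multiplying numerator and
denominator by `2e^{t/λ}` gives the formula.
-/

/-- The Laplace measure with mean 0 and scale `l`: density `u ↦ (1/(2l)) exp(-|u|/l)`
with respect to Lebesgue measure. -/
noncomputable def laplaceMeasure (l : ℝ) : Measure ℝ :=
  volume.withDensity (fun u => ENNReal.ofReal ((1 / (2 * l)) * Real.exp (-|u| / l)))

/-- The Laplace measure with scale `l`, truncated (conditioned) to the interval `(-t, ∞)`. -/
noncomputable def truncLaplace (l t : ℝ) : Measure ℝ :=
  (laplaceMeasure l (Set.Ioi (-t)))⁻¹ • (laplaceMeasure l).restrict (Set.Ioi (-t))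

open Set

section

variable {l : ℝ}

lemma laplaceMeasure_apply_eq_ofReal_integral {s : Set ℝ} {f : ℝ → ℝ} (hl : 0 ≤ l)
    (hs : MeasurableSet s) (hf : ∀ u ∈ s, 1 / (2 * l) * exp (-|u| / l) = f u)
    (hint : IntegrableOn f s) :
    laplaceMeasure l s = ENNReal.ofReal (∫ u in s, f u) := by
  rw [laplaceMeasure, withDensity_apply _ hs,
    setLIntegral_congr_fun hs fun u hu ↦ by rw [hf u hu], ofReal_integral_eq_lintegral_ofReal hint]
  filter_upwards [ae_restrict_mem hs] with u hu
  rw [← hf u hu]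
  positivity

lemma laplaceMeasure_Iic_of_nonpos (hl : 0 < l) {c : ℝ} (hc : c ≤ 0) :
    laplaceMeasure l (Iic c) = ENNReal.ofReal (exp (c / l) / 2) := by
  have hdens : ∀ u ∈ Iic c, 1 / (2 * l) * exp (-|u| / l) = 1 / (2 * l) * exp (l⁻¹ * u) :=
    fun u hu ↦ by rw [abs_of_nonpos (mem_Iic.mp hu |>.trans hc), neg_neg, inv_mul_eq_div]
  rw [laplaceMeasure_apply_eq_ofReal_integral hl.le measurableSet_Iic hdens
    ((integrableOn_exp_mul_Iic (inv_pos.mpr hl) c).const_mul _), integral_const_mul,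
    integral_exp_mul_Iic (inv_pos.mpr hl)]
  field_simp

lemma laplaceMeasure_Ioi_of_nonneg (hl : 0 < l) {c : ℝ} (hc : 0 ≤ c) :
    laplaceMeasure l (Ioi c) = ENNReal.ofReal (exp (-c / l) / 2) := by
  have hdens : ∀ u ∈ Ioi c, 1 / (2 * l) * exp (-|u| / l) = 1 / (2 * l) * exp (-l⁻¹ * u) :=
    fun u hu ↦ by rw [abs_of_pos (hc.trans_lt hu), neg_mul, inv_mul_eq_div, neg_div]
  rw [laplaceMeasure_apply_eq_ofReal_integral hl.le measurableSet_Ioi hdens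
    ((integrableOn_exp_mul_Ioi (neg_lt_zero.mpr (inv_pos.mpr hl)) c).const_mul _),
    integral_const_mul, integral_exp_mul_Ioi (neg_lt_zero.mpr (inv_pos.mpr hl))]
  field_simp

lemma isProbabilityMeasure_laplaceMeasure (hl : 0 < l) :
    IsProbabilityMeasure (laplaceMeasure l) := by
  constructor
  rw [← Iic_union_Ioi (a := 0), measure_union (Iic_disjoint_Ioi le_rfl) measurableSet_Ioi,
    laplaceMeasure_Iic_of_nonpos hl le_rfl, laplaceMeasure_Ioi_of_nonneg hl le_rfl,
    ← ENNReal.ofReal_add (by positivity) (by positivity)]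
  norm_num

lemma laplaceMeasure_Ioc_of_nonpos (hl : 0 < l) {a b : ℝ} (hab : a ≤ b) (hb : b ≤ 0) :
    laplaceMeasure l (Ioc a b) = ENNReal.ofReal ((exp (b / l) - exp (a / l)) / 2) := by
  have := isProbabilityMeasure_laplaceMeasure hl
  have hdiff : Iic b \ Iic a = Ioc a b := by rw [sdiff_eq, compl_Iic, inter_comm, Ioi_inter_Iic]
  rw [← hdiff, measure_sdiff (Iic_subset_Iic.mpr hab) measurableSet_Iic.nullMeasurableSet
    (measure_ne_top _ _), laplaceMeasure_Iic_of_nonpos hl hb,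
    laplaceMeasure_Iic_of_nonpos hl (hab.trans hb), ← ENNReal.ofReal_sub _ (by positivity)]
  ring_nf

lemma laplaceMeasure_Ioi_of_nonpos (hl : 0 < l) {c : ℝ} (hc : c ≤ 0) :
    laplaceMeasure l (Ioi c) = ENNReal.ofReal (1 - exp (c / l) / 2) := by
  have := isProbabilityMeasure_laplaceMeasure hl
  rw [← compl_Iic, prob_compl_eq_one_sub measurableSet_Iic, laplaceMeasure_Iic_of_nonpos hl hc,
    ← ENNReal.ofReal_one, ← ENNReal.ofReal_sub _ (by positivity)]

lemma truncLaplace_apply (t : ℝ) {s : Set ℝ} (hs : MeasurableSet s) :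
    truncLaplace l t s = laplaceMeasure l (s ∩ Ioi (-t)) / laplaceMeasure l (Ioi (-t)) := by
  rw [truncLaplace, Measure.smul_apply, Measure.restrict_apply hs, smul_eq_mul,
    ENNReal.div_eq_inv_mul]

end

/-- Left-tail probability of the truncated Laplace distribution:
`Pr[X ≤ -t + A | X > -t] = (e^{A/λ} - 1)/(2 e^{t/λ} - 1)` for `0 ≤ A ≤ t`. -/
theorem truncLaplace_left_tail (lam A t : ℝ) (hlam : 0 < lam) (hA : 0 ≤ A) (hAt : A ≤ t) :
    truncLaplace lam t (Set.Iic (A - t)) =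
      ENNReal.ofReal ((Real.exp (A / lam) - 1) / (2 * Real.exp (t / lam) - 1)) := by
  have ht : 0 ≤ t := hA.trans hAt
  have hmass : 0 < 1 - exp (-t / lam) / 2 := by
    have : exp (-t / lam) ≤ 1 :=
      exp_le_one_iff.mpr (div_nonpos_of_nonpos_of_nonneg (neg_nonpos.mpr ht) hlam.le)
    linarith
  rw [truncLaplace_apply t measurableSet_Iic, Iic_inter_Ioi,
    laplaceMeasure_Ioc_of_nonpos hlam (by linarith) (by linarith),
    laplaceMeasure_Ioi_of_nonpos hlam (by linarith), ← ENNReal.ofReal_div_of_pos hmass,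
    sub_div A, exp_sub, neg_div, exp_neg]
  congr 1
  field_simp
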